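/- arXiv:1004.1672 — 7 statements merged into one kernel-verified Lean document; each statement's English description precedes it below -/
import Mathlib

section
/- Let G be a simple undirected graph whose vertex set is partitioned into (V1, V2) such that both induced subgraphs G[V1] and G[V2] are forests. If a vertex w in V1 has two distinct neighbors lying in the same connected component of the induced subgraph G[V2], then every feedback vertex set of G that is contained in V1 must contain w. -/
/-- A feedback vertex set of `G` is a set `F` of vertices whose deletion leaves
an acyclic graph. -/
def IsFVS {V : Type*} (G : SimpleGraph V) (F : Set V) : Prop :=
  (G.induce (Fᶜ : Set V)).IsAcyclic

/-! If `w ∉ F`, then `G - F` contains `w` and all of `V2 ⊆ V \ F`, so a walk from `u1` to `u2`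
inside `G[V2]` together with the edges `w u1` and `w u2` closes a cycle of `G - F` through `w`.
In bridge language: in the forest `G - F` the edge `w u2` is a bridge, yet the walk
`w, u1, …, u2` avoids it because its part from `u1` to `u2` never visits `w`. -/

namespace SimpleGraph

variable {V : Type*} {G : SimpleGraph V}

theorem IsAcyclic.mem_support_of_adj_of_adj (hG : G.IsAcyclic) {w u₁ u₂ : V}
    (h₁ : G.Adj w u₁) (h₂ : G.Adj w u₂) (hne : u₁ ≠ u₂) (p : G.Walk u₁ u₂) :
    w ∈ p.support := by
  have hbridge := isBridge_iff_forall_walk_mem_edges.mp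
    (isAcyclic_iff_forall_adj_isBridge.mp hG h₂) (p.cons h₁)
  rw [Walk.edges_cons, List.mem_cons] at hbridge
  rcases hbridge with heq | hmem
  · exact absurd (Sym2.congr_right.mp heq).symm hne
  · exact p.fst_mem_support_of_mem_edges hmem

end SimpleGraph

theorem stmt_0_general {V : Type*} (G : SimpleGraph V) (V1 V2 : Set V)
    (hdisj : Disjoint V1 V2)
    (w : V) (hw : w ∈ V1)
    (u1 u2 : V) (hu1 : u1 ∈ V2) (hu2 : u2 ∈ V2) (hne : u1 ≠ u2)
    (hadj1 : G.Adj w u1) (hadj2 : G.Adj w u2)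
    (hreach : (G.induce V2).Reachable ⟨u1, hu1⟩ ⟨u2, hu2⟩) :
    ∀ F : Set V, F ⊆ V1 → IsFVS G F → w ∈ F := by
  intro F hF hFVS
  by_contra hwF
  have hV2 : V2 ⊆ Fᶜ := fun v hv hvF => hdisj.notMem_of_mem_left (hF hvF) hv
  obtain ⟨p⟩ := hreach
  have hw_mem : (⟨w, hwF⟩ : (Fᶜ : Set V)) ∈ (p.map (G.induceHomOfLE hV2).toHom).support :=
    hFVS.mem_support_of_adj_of_adj (w := ⟨w, hwF⟩) (u₁ := ⟨u1, hV2 hu1⟩)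
      (u₂ := ⟨u2, hV2 hu2⟩) hadj1 hadj2 (fun h => hne (congrArg Subtype.val h)) _
  simp only [SimpleGraph.Walk.support_map, List.mem_map] at hw_mem
  obtain ⟨x, -, hx⟩ := hw_mem
  have hxw : (x : V) = w := congrArg Subtype.val hx
  exact hdisj.notMem_of_mem_left hw (hxw ▸ x.2)

/-- If a vertex `w ∈ V1` has two distinct neighbors lying in the same connected
component of `G[V2]`, then every feedback vertex set of `G` contained in `V1`
must contain `w`. -/
theorem stmt_0 {V : Type*} [Fintype V] (G : SimpleGraph V) (V1 V2 : Set V)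
    (hpart : V1 ∪ V2 = Set.univ) (hdisj : Disjoint V1 V2)
    (hforest1 : (G.induce V1).IsAcyclic) (hforest2 : (G.induce V2).IsAcyclic)
    (w : V) (hw : w ∈ V1)
    (u1 u2 : V) (hu1 : u1 ∈ V2) (hu2 : u2 ∈ V2) (hne : u1 ≠ u2)
    (hadj1 : G.Adj w u1) (hadj2 : G.Adj w u2)
    (hreach : (G.induce V2).Reachable ⟨u1, hu1⟩ ⟨u2, hu2⟩) :
    ∀ F : Set V, F ⊆ V1 → IsFVS G F → w ∈ F :=
  stmt_0_general G V1 V2 hdisj w hw u1 u2 hu1 hu2 hne hadj1 hadj2 hreach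
end

section
/- Let G be a simple undirected graph whose vertex set is partitioned into (V1, V2) such that both induced subgraphs G[V1] and G[V2] are forests, and let v be a vertex in V1 of degree exactly 2 in G whose two neighbors do not both lie in one connected component of G[V2]. If G has a V1-FVS of size k, then G has a V1-FVS of size at most k that does not contain v. -/
namespace SimpleGraph

variable {V : Type*} {G : SimpleGraph V}

lemma isAcyclic_induce_iff {s : Set V} :
    (G.induce s).IsAcyclic ↔ ∀ ⦃u : V⦄ (c : G.Walk u u), c.IsCycle → ∃ x ∈ c.support, x ∉ s := by
  constructor
  · intro h u c hc
    by_contra! hcs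
    refine h (c.induce s hcs) ?_
    rwa [← Walk.isCycle_map_iff_of_injective (f := (Embedding.induce s).toHom)
      Subtype.val_injective, Walk.map_induce]
  · rintro h ⟨u, hu⟩ c hc
    obtain ⟨x, hx, hxs⟩ :=
      h (c.map (Embedding.induce s).toHom) (hc.map Subtype.val_injective)
    rw [Walk.support_map, List.mem_map] at hx
    obtain ⟨y, -, rfl⟩ := hx
    exact hxs y.2

lemma Walk.IsCycle.exists_isPath_of_mem_support {u v : V} {c : G.Walk u u} (hc : c.IsCycle)
    (hv : v ∈ c.support) :
    ∃ (a b : V) (p : G.Walk a b), G.Adj v a ∧ G.Adj v b ∧ a ≠ b ∧ p.IsPath ∧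
      v ∉ p.support ∧ ∀ x ∈ p.support, x ∈ c.support := by
  classical
  suffices ∀ c : G.Walk v v, c.IsCycle → ∃ (a b : V) (p : G.Walk a b), G.Adj v a ∧ G.Adj v b ∧
      a ≠ b ∧ p.IsPath ∧ v ∉ p.support ∧ ∀ x ∈ p.support, x ∈ c.support by
    simpa only [Walk.mem_support_rotate_iff] using this _ (hc.rotate hv)
  rintro (_ | ⟨hva, q⟩) hc
  · exact absurd hc Walk.not_isCycle_nil
  have hq : q.IsPath := ((Walk.cons_isCycle_iff q hva).mp hc).1
  have hqnil : ¬ q.Nil := Walk.not_nil_of_ne hva.ne.symm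
  have hsupp : q.dropLast.support = q.support.dropLast := Walk.support_dropLast hqnil
  refine ⟨_, q.penultimate, q.dropLast, hva, (q.adj_penultimate hqnil).symm, ?_, hq.dropLast,
    ?_, fun x hx => ?_⟩
  · simpa [Walk.penultimate_cons_of_not_nil _ _ hqnil] using hc.snd_ne_penultimate
  · have := hq.support_nodup
    rw [← Walk.dropLast_support_concat, List.nodup_append] at this
    rw [hsupp]
    exact fun h => this.2.2 v h v (List.mem_singleton_self v) rfl
  · rw [hsupp] at hx
    exact List.mem_cons_of_mem _ (List.mem_of_mem_dropLast hx)

lemma exists_adj_iff_of_degree_eq_two {v : V} [Fintype (G.neighborSet v)] (h : G.degree v = 2) :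
    ∃ a b, a ≠ b ∧ ∀ x, G.Adj v x ↔ x = a ∨ x = b := by
  classical
  obtain ⟨a, b, hab, hs⟩ := Finset.card_eq_two.mp h
  refine ⟨a, b, hab, fun x => ?_⟩
  rw [← mem_neighborFinset, hs, Finset.mem_insert, Finset.mem_singleton]

end SimpleGraph

open SimpleGraph

section FeedbackVertexSet

variable {V : Type*} {G : SimpleGraph V}

lemma isFVS_iff {F : Set V} :
    IsFVS G F ↔ ∀ ⦃u : V⦄ (c : G.Walk u u), c.IsCycle → ∃ x ∈ c.support, x ∈ F := by
  simp only [IsFVS, isAcyclic_induce_iff, Set.mem_compl_iff, not_not]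

lemma IsFVS.eq_of_isPath {F : Set V} (hF : IsFVS G F) {a b : V} {p q : G.Walk a b}
    (hp : p.IsPath) (hq : q.IsPath) (hpF : ∀ x ∈ p.support, x ∉ F)
    (hqF : ∀ x ∈ q.support, x ∉ F) : p = q := by
  by_contra hne
  obtain ⟨_, _, _, c, hc, hsub⟩ := hp.exists_isCycle_sublist_of_ne hq hne
  obtain ⟨x, hx, hxF⟩ := isFVS_iff.mp hF c hc
  rcases List.mem_append.mp (hsub.subset hx) with hx | hx
  · exact hpF x hx hxF
  · exact hqF x (List.mem_reverse.mp (List.mem_of_mem_tail hx)) hxF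

/-- A cycle meeting `insert v X` only in `v` consists of `v` and a path between its two
neighbours `a` and `b` that avoids `v`. -/
lemma IsFVS.of_subset_insert {F X : Set V} {v a b : V} (hF : IsFVS G F)
    (hFX : F ⊆ insert v X) (hnbrs : ∀ x, G.Adj v x → x = a ∨ x = b)
    (hab : ∀ p : G.Walk a b, p.IsPath → ∃ x ∈ p.support, x ∈ insert v X) : IsFVS G X := by
  rw [isFVS_iff] at hF ⊢
  intro u c hc
  obtain ⟨x, hxc, hxF⟩ := hF c hc
  rcases hFX hxF with rfl | hxX
  · obtain ⟨a', b', p, ha', hb', hab', hp, hxp, hpc⟩ := hc.exists_isPath_of_mem_support hxc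
    obtain ⟨y, hyp, hy⟩ : ∃ y ∈ p.support, y ∈ insert x X := by
      rcases hnbrs a' ha' with rfl | rfl <;> rcases hnbrs b' hb' with rfl | rfl
      · exact absurd rfl hab'
      · exact hab p hp
      · simpa only [Walk.support_reverse, List.mem_reverse] using hab p.reverse hp.reverse
      · exact absurd rfl hab'
    exact ⟨y, hpc y hyp, (Set.mem_insert_iff.mp hy).resolve_left (fun h => hxp (h ▸ hyp))⟩
  · exact ⟨x, hxc, hxX⟩

lemma IsFVS.sdiff_singleton {F : Set V} {v a b : V} (hF : IsFVS G F)
    (hnbrs : ∀ x, G.Adj v x → x = a ∨ x = b)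
    (hab : ∀ p : G.Walk a b, p.IsPath → ∃ x ∈ p.support, x ∈ F) : IsFVS G (F \ {v}) :=
  hF.of_subset_insert (Set.subset_insert_sdiff_singleton v F) hnbrs fun p hp =>
    (hab p hp).imp fun _ hx => ⟨hx.1, Set.subset_insert_sdiff_singleton v F hx.2⟩

lemma IsFVS.insert_sdiff_singleton {F : Set V} {v a b w : V} (hF : IsFVS G F)
    (hnbrs : ∀ x, G.Adj v x → x = a ∨ x = b) {q : G.Walk a b} (hq : q.IsPath)
    (hqF : ∀ x ∈ q.support, x ∉ F) (hwq : w ∈ q.support) : IsFVS G (insert w (F \ {v})) := by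
  have hFX : F ⊆ insert v (insert w (F \ {v})) :=
    (Set.subset_insert_sdiff_singleton v F).trans
      (Set.insert_subset_insert (Set.subset_insert _ _))
  refine hF.of_subset_insert hFX hnbrs fun p hp => ?_
  by_contra! hpX
  have hpq : p = q := hF.eq_of_isPath hp hq (fun x hx hxF => hpX x hx (hFX hxF)) hqF
  exact hpX w (hpq ▸ hwq) (Set.mem_insert_of_mem _ (Set.mem_insert _ _))

end FeedbackVertexSet

theorem stmt_1_general {V : Type*} [Fintype V]
    (G : SimpleGraph V) [DecidableRel G.Adj] (V1 V2 : Set V)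
    (hpart : V1 ∪ V2 = Set.univ)
    (v : V) (hdeg : G.degree v = 2)
    (hnbrs : ¬ ∃ (u1 u2 : V) (hu1 : u1 ∈ V2) (hu2 : u2 ∈ V2),
      u1 ≠ u2 ∧ G.Adj v u1 ∧ G.Adj v u2 ∧
        (G.induce V2).Reachable ⟨u1, hu1⟩ ⟨u2, hu2⟩)
    (k : ℕ) (F : Set V) (hFsub : F ⊆ V1) (hFVS : IsFVS G F) (hFcard : F.ncard = k) :
    ∃ F' : Set V, F' ⊆ V1 ∧ IsFVS G F' ∧ v ∉ F' ∧ F'.ncard ≤ k := by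
  by_cases hvF : v ∈ F
  case neg => exact ⟨F, hFsub, hFVS, hvF, hFcard.le⟩
  obtain ⟨a, b, hab, hadj⟩ := exists_adj_iff_of_degree_eq_two hdeg
  have hnbrs_ab : ∀ x, G.Adj v x → x = a ∨ x = b := fun x => (hadj x).mp
  have hcard : (F \ {v}).ncard + 1 = k := hFcard ▸ Set.ncard_sdiff_singleton_add_one hvF F.toFinite
  by_cases hpath : ∃ q : G.Walk a b, q.IsPath ∧ ∀ x ∈ q.support, x ∉ F
  case neg =>
    push Not at hpath
    exact ⟨F \ {v}, Set.sdiff_subset.trans hFsub, hFVS.sdiff_singleton hnbrs_ab hpath,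
      fun h => h.2 rfl, by omega⟩
  obtain ⟨q, hq, hqF⟩ := hpath
  obtain ⟨w, hwq, hwV1⟩ : ∃ w ∈ q.support, w ∈ V1 := by
    by_contra! hqV2
    have hqV2 : ∀ x ∈ q.support, x ∈ V2 := fun x hx =>
      ((Set.eq_univ_iff_forall.mp hpart) x).resolve_left (hqV2 x hx)
    exact hnbrs ⟨a, b, _, _, hab, (hadj a).mpr (.inl rfl), (hadj b).mpr (.inr rfl),
      ⟨q.induce V2 hqV2⟩⟩
  refine ⟨insert w (F \ {v}), Set.insert_subset hwV1 (Set.sdiff_subset.trans hFsub),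
    hFVS.insert_sdiff_singleton hnbrs_ab hq hqF hwq, ?_, (Set.ncard_insert_le _ _).trans hcard.le⟩
  rintro (hvw | ⟨-, hvv⟩)
  · exact hqF w hwq (hvw ▸ hvF)
  · exact hvv rfl

/-- If `v ∈ V1` has degree exactly 2 in `G` and its two neighbors do not both lie
in one connected component of `G[V2]`, and `G` has a `V1`-FVS of size `k`, then
`G` has a `V1`-FVS of size at most `k` not containing `v`. -/
theorem stmt_1 {V : Type*} [Fintype V] [DecidableEq V]
    (G : SimpleGraph V) [DecidableRel G.Adj] (V1 V2 : Set V)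
    (hpart : V1 ∪ V2 = Set.univ) (hdisj : Disjoint V1 V2)
    (hforest1 : (G.induce V1).IsAcyclic) (hforest2 : (G.induce V2).IsAcyclic)
    (v : V) (hv : v ∈ V1) (hdeg : G.degree v = 2)
    (hnbrs : ¬ ∃ (u1 u2 : V) (hu1 : u1 ∈ V2) (hu2 : u2 ∈ V2),
      u1 ≠ u2 ∧ G.Adj v u1 ∧ G.Adj v u2 ∧
        (G.induce V2).Reachable ⟨u1, hu1⟩ ⟨u2, hu2⟩)
    (k : ℕ) (F : Set V) (hFsub : F ⊆ V1) (hFVS : IsFVS G F) (hFcard : F.ncard = k) :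
    ∃ F' : Set V, F' ⊆ V1 ∧ IsFVS G F' ∧ v ∉ F' ∧ F'.ncard ≤ k :=
  stmt_1_general G V1 V2 hpart v hdeg hnbrs k F hFsub hFVS hFcard
end

section
/- Let G be a simple undirected graph whose vertex set is partitioned into (V1, V2) such that both induced subgraphs G[V1] and G[V2] are forests, and let v be a vertex in V1 of degree exactly 2 in G whose two neighbors lie in distinct connected components of G[V2] (or at least one neighbor lies in V1). Then G has a V1-FVS of size at most k if and only if the partition (V1 \ {v}, V2 ∪ {v}) (which still induces two forests) admits a (V1 \ {v})-FVS of size at most k. -/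
/-!
Let `F` be a `V1`-FVS containing `v` such that `F \ {v}` is not an FVS. A cycle avoiding
`F \ {v}` passes through `v`, hence through both neighbours `a, b` of `v`, so `a` and `b` are
joined by a path `P` in the forest `G - F`. By the hypothesis on the neighbours of `v`, `P` is
not contained in `V2`, so it has a vertex `w ∈ V1 \ F`. Every cycle avoiding `F \ {v}` contains
an `a`–`b` path of `G - F`, which must contain `P`; so `insert w (F \ {v})` is an FVS inside
`V1 \ {v}` of size at most `|F|`.
-/

open SimpleGraph

section

variable {V : Type*} {G : SimpleGraph V}

theorem isFVS_iff_forall_isCycle {F : Set V} :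
    IsFVS G F ↔ ∀ x (c : G.Walk x x), c.IsCycle → ∃ y ∈ c.support, y ∈ F := by
  constructor
  · intro hF x c hc
    by_contra! hcF
    refine hF (c.induce Fᶜ hcF) (Walk.IsCycle.of_map (f := (Embedding.induce Fᶜ).toHom) ?_)
    rwa [Walk.map_induce]
  · rintro hF ⟨x, hx⟩ c hc
    obtain ⟨y, hy, hyF⟩ :=
      hF _ _ (hc.map (f := (Embedding.induce Fᶜ).toHom) Subtype.val_injective)
    simp only [Walk.support_map, List.mem_map] at hy
    obtain ⟨⟨y, hyF'⟩, -, rfl⟩ := hy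
    exact hyF' hyF

theorem SimpleGraph.IsAcyclic.support_subset_of_isPath {a b : V} (hG : G.IsAcyclic)
    {p q : G.Walk a b} (hp : p.IsPath) : p.support ⊆ q.support := by
  classical
  have hq : q.bypass = p :=
    congrArg Subtype.val ((hG.subsingleton_path a b).elim ⟨_, q.bypass_isPath⟩ ⟨p, hp⟩)
  exact hq ▸ q.support_bypass_subset_support

theorem SimpleGraph.IsAcyclic.support_subset_of_isPath_of_induce {s : Set V} {a b : V}
    (hs : (G.induce s).IsAcyclic) {p q : G.Walk a b} (hp : p.IsPath)
    (hps : ∀ z ∈ p.support, z ∈ s) (hqs : ∀ z ∈ q.support, z ∈ s) :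
    p.support ⊆ q.support := by
  have hp' : (p.induce s hps).IsPath :=
    Walk.IsPath.of_map (f := (Embedding.induce s).toHom) (by rwa [Walk.map_induce])
  intro z hz
  have hz' : ⟨z, hps z hz⟩ ∈ (p.induce s hps).support := by simpa using hz
  simpa using hs.support_subset_of_isPath (q := q.induce s hqs) hp' hz'

theorem SimpleGraph.Walk.IsCycle.exists_walk_between_adj [DecidableEq V] {x v : V}
    {c : G.Walk x x} (hc : c.IsCycle) (hv : v ∈ c.support) :
    ∃ (a b : V) (q : G.Walk a b), a ≠ b ∧ G.Adj v a ∧ G.Adj v b ∧ v ∉ q.support ∧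
      q.support ⊆ c.support := by
  have hcyc := hc.rotate hv
  obtain ⟨a, hva, p, hcp⟩ := Walk.not_nil_iff.mp hcyc.not_nil
  rw [hcp, Walk.cons_isCycle_iff] at hcyc
  obtain ⟨b, hvb, r, hpr⟩ := Walk.exists_eq_cons_of_ne hva.ne p.reverse
  have hrev := hcyc.1.reverse
  rw [hpr, Walk.cons_isPath_iff] at hrev
  have hab : a ≠ b := by
    rintro rfl
    exact hcyc.2 (by simpa using (show s(v, a) ∈ p.reverse.edges by simp [hpr]))
  refine ⟨b, a, r, hab.symm, hvb, hva, hrev.2, fun z hz => ?_⟩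
  have hzp : z ∈ p.reverse.support := by simp [hpr, hz]
  rw [← Walk.mem_support_rotate_iff c v hv, hcp, Walk.support_cons]
  exact List.mem_cons_of_mem _ (by simpa using hzp)

theorem neighborFinset_eq_pair_of_degree_eq_two [Fintype V] [DecidableRel G.Adj] [DecidableEq V]
    {v a b : V} (hdeg : G.degree v = 2) (hab : a ≠ b) (hva : G.Adj v a) (hvb : G.Adj v b) :
    G.neighborFinset v = {a, b} := by
  refine (Finset.eq_of_subset_of_card_le ?_ ?_).symm
  · simp [Finset.insert_subset_iff, hva, hvb]
  · rw [card_neighborFinset_eq_degree, hdeg, Finset.card_pair hab]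

theorem exists_walk_between_adj_of_isCycle_of_isFVS {F : Set V} {x v : V}
    (hF : IsFVS G F) {c : G.Walk x x} (hc : c.IsCycle) (hcF : ∀ y ∈ c.support, y ∉ F \ {v}) :
    ∃ (a b : V) (q : G.Walk a b), a ≠ b ∧ G.Adj v a ∧ G.Adj v b ∧
      (∀ z ∈ q.support, z ∉ F) ∧ q.support ⊆ c.support := by
  classical
  have hvc : v ∈ c.support := by
    obtain ⟨y, hy, hyF⟩ := isFVS_iff_forall_isCycle.mp hF x c hc
    obtain rfl : y = v := by_contra fun hyv => hcF y hy ⟨hyF, hyv⟩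
    exact hy
  obtain ⟨a, b, q, hab, hva, hvb, hvq, hqc⟩ := hc.exists_walk_between_adj hvc
  refine ⟨a, b, q, hab, hva, hvb, fun z hz hzF => hcF z (hqc hz) ⟨hzF, ?_⟩, hqc⟩
  rintro rfl
  exact hvq hz

theorem isFVS_insert_diff_singleton [Fintype V] [DecidableRel G.Adj] {F : Set V} {v a b w : V}
    (hF : IsFVS G F) (hdeg : G.degree v = 2) (hab : a ≠ b) (hva : G.Adj v a) (hvb : G.Adj v b)
    (hw : ∀ q : G.Walk a b, (∀ z ∈ q.support, z ∉ F) → w ∈ q.support) :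
    IsFVS G (insert w (F \ {v})) := by
  classical
  refine isFVS_iff_forall_isCycle.mpr fun x c hc => ?_
  by_contra! hcF
  obtain ⟨a', b', q, hab', hva', hvb', hqF, hqc⟩ :=
    exists_walk_between_adj_of_isCycle_of_isFVS hF hc fun y hy hyF => hcF y hy (.inr hyF)
  have hN := neighborFinset_eq_pair_of_degree_eq_two hdeg hab hva hvb
  have ha' : a' ∈ ({a, b} : Finset V) := by rw [← hN]; simpa using hva'
  have hb' : b' ∈ ({a, b} : Finset V) := by rw [← hN]; simpa using hvb'
  have hwq : w ∈ q.support := by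
    simp only [Finset.mem_insert, Finset.mem_singleton] at ha' hb'
    rcases ha' with rfl | rfl <;> rcases hb' with rfl | rfl
    · exact absurd rfl hab'
    · exact hw q hqF
    · simpa using hw q.reverse (by simpa using hqF)
    · exact absurd rfl hab'
  exact hcF w (hqc hwq) (Set.mem_insert w _)

end

theorem stmt_2_general {V : Type*} [Fintype V]
    (G : SimpleGraph V) [DecidableRel G.Adj] (V1 V2 : Set V)
    (hpart : V1 ∪ V2 = Set.univ)
    (v : V) (hdeg : G.degree v = 2)
    (hnbrs : ¬ ∃ (u1 u2 : V) (hu1 : u1 ∈ V2) (hu2 : u2 ∈ V2),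
      u1 ≠ u2 ∧ G.Adj v u1 ∧ G.Adj v u2 ∧
        (G.induce V2).Reachable ⟨u1, hu1⟩ ⟨u2, hu2⟩)
    (k : ℕ) :
    (∃ F : Set V, F ⊆ V1 ∧ IsFVS G F ∧ F.ncard ≤ k) ↔
    (∃ F : Set V, F ⊆ V1 \ {v} ∧ IsFVS G F ∧ F.ncard ≤ k) := by
  classical
  refine ⟨fun ⟨F, hFV1, hF, hFk⟩ => ?_, fun ⟨F, hFV1, hF, hFk⟩ =>
    ⟨F, hFV1.trans Set.sdiff_subset, hF, hFk⟩⟩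
  by_cases hvF : v ∈ F
  case neg => exact ⟨F, Set.subset_sdiff_singleton hFV1 hvF, hF, hFk⟩
  by_cases hF' : IsFVS G (F \ {v})
  · exact ⟨F \ {v}, Set.sdiff_subset_sdiff_left hFV1, hF',
      (Set.ncard_le_ncard Set.sdiff_subset).trans hFk⟩
  obtain ⟨x, c, hc, hcF⟩ :
      ∃ (x : V) (c : G.Walk x x), c.IsCycle ∧ ∀ y ∈ c.support, y ∉ F \ {v} := by
    simpa [isFVS_iff_forall_isCycle] using hF'
  obtain ⟨a, b, q, hab, hva, hvb, hqF, -⟩ :=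
    exists_walk_between_adj_of_isCycle_of_isFVS hF hc hcF
  have hpF : ∀ z ∈ q.bypass.support, z ∈ Fᶜ := fun z hz =>
    hqF z (q.support_bypass_subset_support hz)
  obtain ⟨w, hwp, hwV1⟩ : ∃ w ∈ q.bypass.support, w ∈ V1 := by
    by_contra! hp
    have hpV2 : ∀ z ∈ q.bypass.support, z ∈ V2 := fun z hz =>
      ((Set.eq_univ_iff_forall.mp hpart) z).resolve_left (hp z hz)
    exact hnbrs ⟨a, b, hpV2 a q.bypass.start_mem_support, hpV2 b q.bypass.end_mem_support,
      hab, hva, hvb, ⟨q.bypass.induce V2 hpV2⟩⟩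
  have hwF : w ∉ F := hpF w hwp
  refine ⟨insert w (F \ {v}), Set.insert_subset ⟨hwV1, fun hwv => hwF (hwv ▸ hvF)⟩
      (Set.sdiff_subset_sdiff_left hFV1), ?_, ?_⟩
  · refine isFVS_insert_diff_singleton hF hdeg hab hva hvb fun q' hq'F => ?_
    exact IsAcyclic.support_subset_of_isPath_of_induce hF q.bypass_isPath hpF hq'F hwp
  · calc (insert w (F \ {v})).ncard ≤ (F \ {v}).ncard + 1 := Set.ncard_insert_le _ _
      _ = F.ncard := Set.ncard_sdiff_singleton_add_one hvF F.toFinite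
      _ ≤ k := hFk

/-- For a degree-2 vertex `v ∈ V1` whose two neighbors do not both lie in a single
connected component of `G[V2]` (i.e. they lie in distinct components of `G[V2]`,
or at least one of them lies in `V1`), the graph `G` has a `V1`-FVS of size at
most `k` if and only if it has a `(V1 \ {v})`-FVS of size at most `k`
(corresponding to the new partition `(V1 \ {v}, V2 ∪ {v})`). -/
theorem stmt_2 {V : Type*} [Fintype V] [DecidableEq V]
    (G : SimpleGraph V) [DecidableRel G.Adj] (V1 V2 : Set V)
    (hpart : V1 ∪ V2 = Set.univ) (hdisj : Disjoint V1 V2)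
    (hforest1 : (G.induce V1).IsAcyclic) (hforest2 : (G.induce V2).IsAcyclic)
    (v : V) (hv : v ∈ V1) (hdeg : G.degree v = 2)
    (hnbrs : ¬ ∃ (u1 u2 : V) (hu1 : u1 ∈ V2) (hu2 : u2 ∈ V2),
      u1 ≠ u2 ∧ G.Adj v u1 ∧ G.Adj v u2 ∧
        (G.induce V2).Reachable ⟨u1, hu1⟩ ⟨u2, hu2⟩)
    (k : ℕ) :
    (∃ F : Set V, F ⊆ V1 ∧ IsFVS G F ∧ F.ncard ≤ k) ↔
    (∃ F : Set V, F ⊆ V1 \ {v} ∧ IsFVS G F ∧ F.ncard ≤ k) :=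
  stmt_2_general G V1 V2 hpart v hdeg hnbrs k
end

section
/- Let G be a simple undirected graph whose vertex set is partitioned into (V1, V2) such that both induced subgraphs G[V1] and G[V2] are forests, and suppose every vertex of V1 has degree at least 3 in G. Let l be the number of connected components of G[V2] and τ the number of connected components of G[V1]. If |V1| > 2k + l − τ, then G has no V1-FVS of size at most k. -/
open Finset

namespace SimpleGraph

section Components

variable {V : Type*} (G : SimpleGraph V)

lemma card_eq_sum_card_supp [Finite V] [Fintype G.ConnectedComponent] :
    Nat.card V = ∑ C : G.ConnectedComponent, Nat.card C.supp := by
  rw [← Nat.card_congr (Equiv.sigmaFiberEquiv G.connectedComponentMk), Nat.card_sigma]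
  rfl

noncomputable def ConnectedComponent.sigmaEdgeSetEquiv :
    (Σ C : G.ConnectedComponent, C.toSimpleGraph.edgeSet) ≃ G.edgeSet :=
  Equiv.ofBijective (fun e => ⟨e.2.1.map e.1.toSimpleGraph_hom,
      e.1.toSimpleGraph_hom.map_mem_edgeSet e.2.2⟩) <| by
    constructor
    · rintro ⟨C, ⟨e, _⟩⟩ ⟨D, ⟨e', _⟩⟩ h
      have hmap : Sym2.map Subtype.val e = Sym2.map Subtype.val e' := congrArg Subtype.val h
      obtain rfl : C = D := by
        induction e using Sym2.ind with
        | _ a b =>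
        obtain ⟨a', -, ha'⟩ :=
          Sym2.mem_map.1 (hmap ▸ Sym2.mem_map.2 ⟨a, Sym2.mem_mk_left _ _, rfl⟩)
        exact ConnectedComponent.eq_of_common_vertex a.2 (ha' ▸ a'.2)
      obtain rfl := Sym2.map.injective Subtype.val_injective hmap
      rfl
    · rintro ⟨e, he⟩
      induction e using Sym2.ind with
      | _ u v =>
      have hv : v ∈ (G.connectedComponentMk u).supp :=
        (G.connectedComponentMk u).mem_supp_of_adj_mem_supp rfl he
      exact ⟨⟨G.connectedComponentMk u, ⟨s(⟨u, rfl⟩, ⟨v, hv⟩), he⟩⟩, rfl⟩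

lemma card_edgeSet_add_card_connectedComponent_eq_sum [Finite V]
    [Fintype G.ConnectedComponent] :
    Nat.card G.edgeSet + Nat.card G.ConnectedComponent =
      ∑ C : G.ConnectedComponent, (Nat.card C.toSimpleGraph.edgeSet + 1) := by
  rw [← Nat.card_congr (ConnectedComponent.sigmaEdgeSetEquiv G), Nat.card_sigma,
    Nat.card_eq_fintype_card, ← card_univ, card_eq_sum_ones, ← sum_add_distrib]

variable {G}

lemma IsAcyclic.card_edgeSet_add_card_connectedComponent [Finite V] (hG : G.IsAcyclic) :
    Nat.card G.edgeSet + Nat.card G.ConnectedComponent = Nat.card V := by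
  have := Fintype.ofFinite G.ConnectedComponent
  rw [card_edgeSet_add_card_connectedComponent_eq_sum, card_eq_sum_card_supp G]
  exact sum_congr rfl fun C _ =>
    (isTree_iff_connected_and_card.1 (hG.isTree_connectedComponent C)).2

variable (G)

lemma card_le_card_edgeSet_add_card_connectedComponent [Finite V] :
    Nat.card V ≤ Nat.card G.edgeSet + Nat.card G.ConnectedComponent := by
  have := Fintype.ofFinite G.ConnectedComponent
  rw [card_edgeSet_add_card_connectedComponent_eq_sum, card_eq_sum_card_supp G]
  exact sum_le_sum fun C _ => C.connected_toSimpleGraph.card_vert_le_card_edgeSet_add_one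

end Components

section DegreeCounting

variable {V : Type*} (G : SimpleGraph V) [DecidableRel G.Adj]

lemma card_interedges_self (s : Finset V) :
    #(G.interedges s s) = 2 * Nat.card (G.induce (s : Set V)).edgeSet := by
  rw [Nat.card_eq_fintype_card, ← edgeFinset_card, two_mul_card_edgeFinset,
    ← card_map ((Function.Embedding.subtype _).prodMap (Function.Embedding.subtype _))]
  congr 1
  ext ⟨a, b⟩
  simp only [mem_interedges_iff, SetLike.coe_sort_coe, comap_adj, Function.Embedding.subtype_apply,
    mem_map, mem_filter, mem_univ, true_and, Function.Embedding.coe_prodMap,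
    Function.Embedding.coe_subtype, Prod.exists, Prod.map_apply, Prod.mk.injEq, Subtype.exists,
    exists_and_left, exists_prop, ↓existsAndEq, and_true]
  tauto

variable [Fintype V]

lemma sum_degree_eq_card_interedges (s : Finset V) :
    ∑ v ∈ s, G.degree v = #(G.interedges s univ) := by
  rw [interedges_def, card_filter, sum_product]
  refine sum_congr rfl fun v _ => ?_
  rw [← card_neighborFinset_eq_degree, neighborFinset_eq_filter, card_filter]

variable [DecidableEq V]

lemma sum_degree_eq_two_mul_card_edgeSet_induce_add_card_interedges (s : Finset V) :
    ∑ v ∈ s, G.degree v =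
      2 * Nat.card (G.induce (s : Set V)).edgeSet + #(G.interedges s sᶜ) := by
  rw [sum_degree_eq_card_interedges, ← card_interedges_self,
    ← card_union_of_disjoint (G.interedges_disjoint_right s disjoint_compl_right)]
  congr 1
  ext ⟨a, b⟩
  simp only [mem_interedges_iff, mem_union, mem_univ, mem_compl]
  tauto

lemma card_interedges_compl_comm (s : Finset V) :
    #(G.interedges sᶜ s) = #(G.interedges s sᶜ) :=
  @Rel.card_interedges_comm _ G.Adj _ G.symm _ _

lemma sum_degree_inter_add_card_edgeSet_induce_compl {s t : Finset V} (hst : s ∪ t = univ) :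
    ∑ v ∈ s ∩ t, G.degree v + Nat.card (G.induce (sᶜ : Finset V)).edgeSet +
        Nat.card (G.induce (tᶜ : Finset V)).edgeSet =
      Nat.card (G.induce (s : Set V)).edgeSet + Nat.card (G.induce (t : Set V)).edgeSet := by
  have hs := G.sum_degree_eq_two_mul_card_edgeSet_induce_add_card_interedges s
  have hsc := G.sum_degree_eq_two_mul_card_edgeSet_induce_add_card_interedges sᶜ
  have ht := G.sum_degree_eq_two_mul_card_edgeSet_induce_add_card_interedges t
  have htc := G.sum_degree_eq_two_mul_card_edgeSet_induce_add_card_interedges tᶜ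
  rw [compl_compl, card_interedges_compl_comm] at hsc htc
  have hunion := sum_union_inter (s₁ := s) (s₂ := t) (f := fun v => G.degree v)
  rw [hst] at hunion
  have hsum_s := sum_add_sum_compl s fun v => G.degree v
  have hsum_t := sum_add_sum_compl t fun v => G.degree v
  omega

end DegreeCounting

end SimpleGraph

theorem stmt_3_general {V : Type*} [Fintype V] [DecidableEq V]
    (G : SimpleGraph V) [DecidableRel G.Adj] (V1 V2 : Set V)
    (hpart : V1 ∪ V2 = Set.univ) (hdisj : Disjoint V1 V2)
    (hforest1 : (G.induce V1).IsAcyclic)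
    (hdeg : ∀ v ∈ V1, 3 ≤ G.degree v)
    (k l τ : ℕ)
    (hl : l = Nat.card (G.induce V2).ConnectedComponent)
    (hτ : τ = Nat.card (G.induce V1).ConnectedComponent)
    (hbig : (V1.ncard : ℤ) > 2 * (k : ℤ) + (l : ℤ) - (τ : ℤ)) :
    ¬ ∃ F : Set V, F ⊆ V1 ∧ IsFVS G F ∧ F.ncard ≤ k := by
  rintro ⟨F, hFV1, hFVS, hFk⟩
  lift V1 to Finset V using V1.toFinite
  lift V2 to Finset V using V2.toFinite
  lift F to Finset V using F.toFinite
  rw [coe_subset] at hFV1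
  rw [IsFVS, ← coe_compl] at hFVS
  simp only [Set.ncard_coe_finset] at hbig hFk
  obtain rfl : V2 = V1ᶜ := by
    rw [← coe_union, coe_eq_univ] at hpart
    rw [disjoint_coe] at hdisj
    exact (IsCompl.compl_eq ⟨hdisj, codisjoint_iff.2 hpart⟩).symm
  have hcover : V1 ∪ Fᶜ = univ := eq_univ_of_forall fun v => by
    by_cases hv : v ∈ F
    · simp [hFV1 hv]
    · simp [hv]
  have hcount := G.sum_degree_inter_add_card_edgeSet_induce_compl hcover
  rw [compl_compl] at hcount
  have hdeg3 : #(V1 ∩ Fᶜ) * 3 ≤ ∑ v ∈ V1 ∩ Fᶜ, G.degree v :=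
    card_nsmul_le_sum _ _ 3 fun v hv => hdeg v (mem_inter.1 hv).1
  have hV1 := hforest1.card_edgeSet_add_card_connectedComponent
  have hFc := hFVS.card_edgeSet_add_card_connectedComponent
  have hV2 := (G.induce (V1ᶜ : Finset V)).card_le_card_edgeSet_add_card_connectedComponent
  simp only [coe_sort_coe, Nat.card_eq_finsetCard] at hV1 hFc hV2
  have hA : #(V1 ∩ Fᶜ) + #F = #V1 := by
    rw [← sdiff_eq_inter_compl]
    exact card_sdiff_add_card_eq_card hFV1
  have := card_add_card_compl V1
  have := card_add_card_compl F
  omega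

/-- If every vertex of `V1` has degree at least 3 in `G` and
`|V1| > 2k + l − τ`, where `l` is the number of connected components of `G[V2]`
and `τ` is the number of connected components of `G[V1]`, then `G` has no
`V1`-FVS of size at most `k`. -/
theorem stmt_3 {V : Type*} [Fintype V] [DecidableEq V]
    (G : SimpleGraph V) [DecidableRel G.Adj] (V1 V2 : Set V)
    (hpart : V1 ∪ V2 = Set.univ) (hdisj : Disjoint V1 V2)
    (hforest1 : (G.induce V1).IsAcyclic) (hforest2 : (G.induce V2).IsAcyclic)
    (hdeg : ∀ v ∈ V1, 3 ≤ G.degree v)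
    (k l τ : ℕ)
    (hl : l = Nat.card (G.induce V2).ConnectedComponent)
    (hτ : τ = Nat.card (G.induce V1).ConnectedComponent)
    (hbig : (V1.ncard : ℤ) > 2 * (k : ℤ) + (l : ℤ) - (τ : ℤ)) :
    ¬ ∃ F : Set V, F ⊆ V1 ∧ IsFVS G F ∧ F.ncard ≤ k :=
  stmt_3_general G V1 V2 hpart hdisj hforest1 hdeg k l τ hl hτ hbig
end

section
/- Let G be a connected simple undirected graph whose vertex set is partitioned into (V1, V2) such that both induced subgraphs G[V1] and G[V2] are forests and every vertex of V1 has degree exactly 3 in G. Let F be a minimum-size V1-FVS of G, and let T be a spanning tree of G containing all edges of the forest G − F. Let E2 be the set of edges of G not in T with both endpoints in F, and E1 the set of edges of G not in T with exactly one endpoint in F. Then each endpoint of each edge in E2 is incident to exactly one edge of E1, and no two edges of E2 share a common endpoint. -/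
/-!
Minimality of `F` means that for each `u ∈ F` the graph `G - (F \ {u})` contains a cycle. Since
`T` is acyclic and contains every edge of `G - F`, that cycle has an edge outside `T`, which must
join `u` to a vertex outside `F`. Together with the `E2`-edge at `u` these are two non-tree edges
at `u`; as `T` is connected, `u` also has a tree edge, and since `u` has degree 3 there is no room
for a further non-tree edge.
-/

namespace SimpleGraph

variable {V : Type*} {G T : SimpleGraph V} {F : Set V} {u v : V}

lemma exists_adj_notMem_not_adj_of_not_isFVS (hT : T.IsAcyclic)
    (hTF : ∀ a b : V, G.Adj a b → a ∉ F → b ∉ F → T.Adj a b)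
    (hu : ¬ IsFVS G (F \ {u})) : ∃ w ∉ F, G.Adj u w ∧ ¬ T.Adj u w := by
  set S : Set V := (F \ {u})ᶜ
  obtain ⟨x, c, hc⟩ : ∃ x, ∃ c : (G.induce S).Walk x x, c.IsCycle := by
    simp only [IsFVS, IsAcyclic, not_forall, not_not] at hu
    exact hu
  obtain ⟨e, he, heT⟩ : ∃ e ∈ c.edges, e ∉ (T.induce S).edgeSet := by
    by_contra! h
    exact hT.induce S _ (hc.transfer h)
  induction e using Sym2.ind with
  | h a b =>
    have hab : G.Adj a b := c.adj_of_mem_edges he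
    have hab_T : ¬ T.Adj a b := heT
    have of_mem : ∀ a b : S, G.Adj a b → ¬ T.Adj a b → (a : V) ∈ F →
        ∃ w ∉ F, G.Adj u w ∧ ¬ T.Adj u w := by
      rintro ⟨p, hp⟩ ⟨q, hq⟩ hpq hpq_T hpF
      obtain rfl : p = u := by simpa [S, hpF] using hp
      exact ⟨q, fun hqF => hq ⟨hqF, hpq.ne'⟩, hpq, hpq_T⟩
    by_cases haF : (a : V) ∈ F
    · exact of_mem a b hab hab_T haF
    · have hbF : (b : V) ∈ F := by_contra fun hbF => hab_T (hTF _ _ hab haF hbF)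
      exact of_mem b a hab.symm (fun h => hab_T h.symm) hbF

lemma eq_or_eq_or_eq_of_degree_eq_three [Fintype (G.neighborSet u)] (hdeg : G.degree u = 3)
    {w x y : V} (hv : G.Adj u v) (hw : G.Adj u w) (hx : G.Adj u x)
    (hvw : v ≠ w) (hvx : v ≠ x) (hwx : w ≠ x) (hy : G.Adj u y) : y = v ∨ y = w ∨ y = x := by
  classical
  have hN : G.neighborFinset u = {v, w, x} := by
    refine (Finset.eq_of_subset_of_card_le ?_ ?_).symm
    · intro z hz
      simp only [Finset.mem_insert, Finset.mem_singleton] at hz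
      rcases hz with rfl | rfl | rfl <;> simpa
    · rw [card_neighborFinset_eq_degree, hdeg, Finset.card_insert_of_notMem (by simp [hvw, hvx]),
        Finset.card_pair hwx]
  simpa [hN] using (G.mem_neighborFinset u y).mpr hy

lemma exists_nontree_adj_notMem_of_nontree_adj_mem [Fintype (G.neighborSet u)]
    (hle : T ≤ G) (htree : T.IsTree) (hTF : ∀ a b : V, G.Adj a b → a ∉ F → b ∉ F → T.Adj a b)
    (hdeg : G.degree u = 3) (hu : ¬ IsFVS G (F \ {u}))
    (hv : G.Adj u v) (hvF : v ∈ F) (hvT : ¬ T.Adj u v) :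
    ∃ w ∉ F, G.Adj u w ∧ ¬ T.Adj u w ∧ ∀ y, G.Adj u y → ¬ T.Adj u y → y = v ∨ y = w := by
  obtain ⟨w, hwF, hw, hwT⟩ := exists_adj_notMem_not_adj_of_not_isFVS htree.isAcyclic hTF hu
  obtain ⟨x, hx⟩ := (htree.connected.preconnected u v).nonempty_neighborSet_left hv.ne
  have hxT : T.Adj u x := hx
  refine ⟨w, hwF, hw, hwT, fun y hy hyT => ?_⟩
  rcases eq_or_eq_or_eq_of_degree_eq_three hdeg hv hw (hle hxT) (fun h => hwF (h ▸ hvF))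
    (fun h => hvT (h ▸ hxT)) (fun h => hwT (h ▸ hxT)) hy with rfl | rfl | rfl
  · exact .inl rfl
  · exact .inr rfl
  · exact absurd hxT hyT

end SimpleGraph

theorem stmt_8_general {V : Type*} [Fintype V]
    (G : SimpleGraph V) [DecidableRel G.Adj]
    (V1 : Set V)
    (hdeg : ∀ v ∈ V1, G.degree v = 3)
    (F : Set V) (hFsub : F ⊆ V1)
    (hmin : ∀ F' : Set V, F' ⊆ V1 → IsFVS G F' → F.ncard ≤ F'.ncard)
    (T : SimpleGraph V) (hle : T ≤ G) (htree : T.IsTree)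
    (hTF : ∀ u v : V, G.Adj u v → u ∉ F → v ∉ F → T.Adj u v)
    (E1 E2 : Set (Sym2 V))
    (hE2 : E2 = {e | e ∈ G.edgeSet \ T.edgeSet ∧ ∀ u ∈ e, u ∈ F})
    (hE1 : E1 = {e | e ∈ G.edgeSet \ T.edgeSet ∧
      ∃ u v : V, e = s(u, v) ∧ u ∈ F ∧ v ∉ F}) :
    (∀ e ∈ E2, ∀ u : V, u ∈ e → ∃! e' : Sym2 V, e' ∈ E1 ∧ u ∈ e') ∧
    (∀ e ∈ E2, ∀ e' ∈ E2, e ≠ e' → ∀ u : V, u ∈ e → u ∉ e') := by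
  subst hE1 hE2
  have hcycle (u : V) (hu : u ∈ F) : ¬ IsFVS G (F \ {u}) := fun h =>
    (hmin _ (Set.sdiff_subset.trans hFsub) h).not_gt
      (Set.ncard_sdiff_singleton_lt_of_mem hu (Set.toFinite F))
  have key (u : V) (hu : u ∈ F) (v : V) (hv : G.Adj u v) (hvF : v ∈ F) (hvT : ¬ T.Adj u v) :=
    SimpleGraph.exists_nontree_adj_notMem_of_nontree_adj_mem hle htree hTF (hdeg u (hFsub hu)) (hcycle u hu)
      hv hvF hvT
  constructor
  · rintro _ ⟨⟨hv, hvT⟩, hF⟩ u hue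
    obtain ⟨v, rfl⟩ := Sym2.mem_iff_exists.mp hue
    have hu := hF u hue
    obtain ⟨w, hwF, hw, hwT, hother⟩ := key u hu v hv (hF v (Sym2.mem_mk_right u v)) hvT
    refine ⟨s(u, w), ⟨⟨⟨hw, hwT⟩, u, w, rfl, hu, hwF⟩, Sym2.mem_mk_left u w⟩, ?_⟩
    rintro _ ⟨⟨⟨hb, hbT⟩, a, b, rfl, -, hbF⟩, huab⟩
    rcases Sym2.mem_iff.mp huab with rfl | rfl
    · rcases hother b hb hbT with rfl | rfl
      · exact absurd (hF b (Sym2.mem_mk_right _ b)) hbF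
      · rfl
    · exact absurd hu hbF
  · rintro _ ⟨⟨hv, hvT⟩, hF⟩ e' ⟨⟨he', he'T⟩, hF'⟩ hne u hue hue'
    obtain ⟨v, rfl⟩ := Sym2.mem_iff_exists.mp hue
    obtain ⟨v', rfl⟩ := Sym2.mem_iff_exists.mp hue'
    obtain ⟨w, hwF, -, -, hother⟩ := key u (hF u hue) v hv (hF v (Sym2.mem_mk_right u v)) hvT
    rcases hother v' he' he'T with rfl | rfl
    · exact hne rfl
    · exact hwF (hF' v' (Sym2.mem_mk_right u v'))

/-- Let `G` be connected with partition `(V1, V2)` into two forests, where every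
vertex of `V1` has degree exactly 3. Let `F` be a minimum `V1`-FVS and `T` a
spanning tree of `G` containing the forest `G − F`. With `E2` the edges of `G`
not in `T` with both endpoints in `F` and `E1` those with exactly one endpoint
in `F`: each endpoint of each edge of `E2` is incident to exactly one edge of
`E1`, and no two distinct edges of `E2` share a common endpoint. -/
theorem stmt_8 {V : Type*} [Fintype V] [DecidableEq V]
    (G : SimpleGraph V) [DecidableRel G.Adj] (hconn : G.Connected)
    (V1 V2 : Set V)
    (hpart : V1 ∪ V2 = Set.univ) (hdisj : Disjoint V1 V2)
    (hforest1 : (G.induce V1).IsAcyclic) (hforest2 : (G.induce V2).IsAcyclic)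
    (hdeg : ∀ v ∈ V1, G.degree v = 3)
    (F : Set V) (hFsub : F ⊆ V1) (hFVS : IsFVS G F)
    (hmin : ∀ F' : Set V, F' ⊆ V1 → IsFVS G F' → F.ncard ≤ F'.ncard)
    (T : SimpleGraph V) (hle : T ≤ G) (htree : T.IsTree)
    (hTF : ∀ u v : V, G.Adj u v → u ∉ F → v ∉ F → T.Adj u v)
    (E1 E2 : Set (Sym2 V))
    (hE2 : E2 = {e | e ∈ G.edgeSet \ T.edgeSet ∧ ∀ u ∈ e, u ∈ F})
    (hE1 : E1 = {e | e ∈ G.edgeSet \ T.edgeSet ∧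
      ∃ u v : V, e = s(u, v) ∧ u ∈ F ∧ v ∉ F}) :
    (∀ e ∈ E2, ∀ u : V, u ∈ e → ∃! e' : Sym2 V, e' ∈ E1 ∧ u ∈ e') ∧
    (∀ e ∈ E2, ∀ e' ∈ E2, e ≠ e' → ∀ u : V, u ∈ e → u ∉ e') :=
  stmt_8_general G V1 hdeg F hFsub hmin T hle htree hTF E1 E2 hE2 hE1
end

section
/- Let G be a connected simple undirected graph whose vertex set is partitioned into (V1, V2) such that both induced subgraphs G[V1] and G[V2] are forests and every vertex of V1 has degree exactly 3 in G. Then μ(G) ≥ β(G) − f_{V1}(G), where f_{V1}(G) is the minimum size of a V1-FVS of G, β(G) = |E(G)| − |V(G)| + 1 is the Betti number, and μ(G) is the V1-adjacency matching number of G. -/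
/-- `fV1 G V1` is the minimum size of a feedback vertex set of `G` contained in
`V1` (a minimum `V1`-FVS). -/
noncomputable def fV1 {V : Type*} (G : SimpleGraph V) (V1 : Set V) : ℕ :=
  sInf {k | ∃ F : Set V, F ⊆ V1 ∧ IsFVS G F ∧ F.ncard = k}

/-- A `T_{G[V2]}`-tree: a spanning tree of `G` containing every edge of the
induced subgraph `G[V2]`. -/
def IsV2SpanningTree {V : Type*} (G T : SimpleGraph V) (V2 : Set V) : Prop :=
  T ≤ G ∧ T.IsTree ∧ ∀ u v : V, u ∈ V2 → v ∈ V2 → G.Adj u v → T.Adj u v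

/-- The `V1`-adjacency matching number `μ(G)`: the maximum, over all spanning
trees `T` of `G` containing all edges of `G[V2]`, of the number of 2-groups in a
`V1`-adjacency matching of the edges of `G` not in `T`, where a 2-group is a
pair of distinct edges sharing a common endpoint in `V1`. -/
noncomputable def adjMatchNum {V : Type*} (G : SimpleGraph V) (V1 V2 : Set V) : ℕ :=
  sSup {h | ∃ T : SimpleGraph V, IsV2SpanningTree G T V2 ∧
    ∃ e₁ e₂ : Fin h → Sym2 V,
      Function.Injective (Sum.elim e₁ e₂) ∧
      (∀ i, e₁ i ∈ G.edgeSet \ T.edgeSet ∧ e₂ i ∈ G.edgeSet \ T.edgeSet) ∧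
      (∀ i, ∃ x ∈ V1, x ∈ e₁ i ∧ x ∈ e₂ i)}

open SimpleGraph Finset Function

section Fibers

variable {α β : Type*} [DecidableEq β] {K : Finset α} {a : α → β}

theorem card_le_card_add_card_filter_card_fiber_eq_two {B : Finset β}
    (hmaps : Set.MapsTo a K B) (hfib : ∀ b ∈ B, #{e ∈ K | a e = b} ≤ 2) :
    #K ≤ #B + #{b ∈ B | #{e ∈ K | a e = b} = 2} := by
  rw [card_eq_sum_card_fiberwise hmaps, card_filter, card_eq_sum_ones B, ← sum_add_distrib]
  refine sum_le_sum fun b hb => ?_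
  have := hfib b hb
  split <;> omega

theorem exists_injective_sumElim_of_card_fiber_eq_two [DecidableEq α] {P : Finset β}
    (hP : ∀ b ∈ P, #{e ∈ K | a e = b} = 2) :
    ∃ e₁ e₂ : Fin #P → α, Injective (Sum.elim e₁ e₂) ∧
      ∀ i, e₁ i ∈ K ∧ e₂ i ∈ K ∧ a (e₁ i) = a (e₂ i) := by
  set ν : Fin #P → β := fun i => P.equivFin.symm i
  have hν : Injective ν := Subtype.val_injective.comp P.equivFin.symm.injective
  have hpair (i : Fin #P) : ∃ x y, x ≠ y ∧ {e ∈ K | a e = ν i} = {x, y} :=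
    card_eq_two.mp (hP _ (P.equivFin.symm i).2)
  choose e₁ e₂ hne hfiber using hpair
  have he₁ (i : Fin #P) : e₁ i ∈ K ∧ a (e₁ i) = ν i :=
    mem_filter.mp (hfiber i ▸ mem_insert_self _ _)
  have he₂ (i : Fin #P) : e₂ i ∈ K ∧ a (e₂ i) = ν i :=
    mem_filter.mp (hfiber i ▸ mem_insert_of_mem (mem_singleton_self _))
  refine ⟨e₁, e₂, ?_, fun i => ⟨(he₁ i).1, (he₂ i).1, (he₁ i).2.trans (he₂ i).2.symm⟩⟩
  refine Injective.sumElim (fun i j h => hν ?_) (fun i j h => hν ?_) fun i j h => ?_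
  · rw [← (he₁ i).2, ← (he₁ j).2, h]
  · rw [← (he₂ i).2, ← (he₂ j).2, h]
  · obtain rfl : i = j := hν (by rw [← (he₁ i).2, ← (he₂ j).2, h])
    exact hne i h

end Fibers

namespace SimpleGraph

variable {V : Type*} {G T : SimpleGraph V}

theorem IsAcyclic.of_induce_of_support_subset {s : Set V} (h : (G.induce s).IsAcyclic)
    (hs : G.support ⊆ s) : G.IsAcyclic := by
  intro v c hc
  have hsupp : ∀ x ∈ c.support, x ∈ s := by
    intro x hx
    rw [← c.cons_tail_support, List.mem_cons] at hx
    have htail : x ∈ c.support.tail := hx.elim (· ▸ c.end_mem_tail_support hc.not_nil) id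
    rw [← c.map_snd_darts, List.mem_map] at htail
    obtain ⟨d, -, rfl⟩ := htail
    exact hs d.adj.right_mem_support
  refine h (c.induce s hsupp) ((Walk.isCycle_map_iff_of_injective
    (f := (Embedding.induce (G := G) s).toHom) Subtype.val_injective).mp ?_)
  rwa [Walk.map_induce]

theorem IsFVS.exists_isTree_le {F : Set V} (hconn : G.Connected) (hF : IsFVS G F) :
    ∃ T ≤ G, T.IsTree ∧ ∀ ⦃u v⦄, u ∉ F → v ∉ F → G.Adj u v → T.Adj u v := by
  set H := ((⊤ : G.Subgraph).induce Fᶜ).spanningCoe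
  have hHG : H ≤ G := Subgraph.spanningCoe_le _
  have hH : H.IsAcyclic :=
    IsAcyclic.of_induce_of_support_subset (s := Fᶜ) (hF.anti fun _ _ h => hHG h)
      fun _ ⟨_, hu, _⟩ => hu
  obtain ⟨T, hHT, hTG, hT⟩ := hconn.exists_isTree_le_of_le_of_isAcyclic hHG hH
  exact ⟨T, hTG, hT, fun u v hu hv huv => hHT ⟨hu, hv, huv⟩⟩

theorem card_incidenceFinset_sdiff_edgeFinset_lt_degree [Fintype V] [DecidableEq V]
    [Nontrivial V] [DecidableRel G.Adj] [Fintype T.edgeSet] (hTG : T ≤ G) (hT : T.Connected)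
    (v : V) : #(G.incidenceFinset v \ T.edgeFinset) < G.degree v := by
  obtain ⟨w, hw⟩ := hT.preconnected.exists_adj_of_nontrivial v
  rw [← card_incidenceFinset_eq_degree]
  refine card_lt_card ((ssubset_iff_of_subset sdiff_subset).2 ⟨s(v, w), ?_, ?_⟩)
  · exact (mem_incidenceFinset _ _ _).2 ⟨hTG hw, Sym2.mem_mk_left _ _⟩
  · exact fun h => (mem_sdiff.1 h).2 (mem_edgeFinset.2 hw)

theorem IsTree.exists_nontree_edge_pairs [Fintype V] [DecidableEq V] [DecidableRel G.Adj]
    [DecidableRel T.Adj] (hT : T.IsTree) (hTG : T ≤ G) {F : Set V} [Fintype F]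
    (hdeg : ∀ v ∈ F, G.degree v = 3) (hcover : ∀ e ∈ G.edgeSet \ T.edgeSet, ∃ v ∈ F, v ∈ e) :
    ∃ p, #(G.edgeFinset \ T.edgeFinset) ≤ #F.toFinset + p ∧
      ∃ e₁ e₂ : Fin p → Sym2 V, Injective (Sum.elim e₁ e₂) ∧
        (∀ i, e₁ i ∈ G.edgeSet \ T.edgeSet ∧ e₂ i ∈ G.edgeSet \ T.edgeSet) ∧
        ∀ i, ∃ x ∈ F, x ∈ e₁ i ∧ x ∈ e₂ i := by
  set K := G.edgeFinset \ T.edgeFinset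
  have hK {e} : e ∈ K ↔ e ∈ G.edgeSet \ T.edgeSet := by simp [K]
  have hcoverK : ∀ e ∈ K, ∃ v ∈ F, v ∈ e := fun e he => hcover e (hK.1 he)
  have := hT.connected.nonempty
  choose! a haF hae using hcoverK
  have hfib : ∀ v ∈ F.toFinset, #{e ∈ K | a e = v} ≤ 2 := by
    intro v hv
    rw [Set.mem_toFinset] at hv
    have hsub : {e ∈ K | a e = v} ⊆ G.incidenceFinset v \ T.edgeFinset := by
      intro e he
      obtain ⟨heK, rfl⟩ := mem_filter.1 he
      obtain ⟨heG, heT⟩ := mem_sdiff.1 heK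
      exact mem_sdiff.2 ⟨(mem_incidenceFinset _ _ _).2 ⟨mem_edgeFinset.1 heG, hae e heK⟩, heT⟩
    have hv3 := hdeg v hv
    obtain ⟨w, hw⟩ := (G.degree_pos_iff_exists_adj v).1 (by omega)
    have : Nontrivial V := ⟨⟨v, w, hw.ne⟩⟩
    have := card_incidenceFinset_sdiff_edgeFinset_lt_degree hTG hT.connected v
    have := card_le_card hsub
    omega
  obtain ⟨e₁, e₂, hinj, he⟩ := exists_injective_sumElim_of_card_fiber_eq_two (K := K) (a := a)
    (P := {v ∈ F.toFinset | #{e ∈ K | a e = v} = 2}) fun v hv => (mem_filter.1 hv).2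
  refine ⟨_, card_le_card_add_card_filter_card_fiber_eq_two
    (fun e he => Set.mem_toFinset.2 (haF e he)) hfib, e₁, e₂, hinj,
    fun i => ⟨hK.1 (he i).1, hK.1 (he i).2.1⟩, fun i => ⟨a (e₁ i), haF _ (he i).1, ?_, ?_⟩⟩
  · exact hae _ (he i).1
  · exact (he i).2.2 ▸ hae _ (he i).2.1

end SimpleGraph

section FeedbackVertexSet

variable {V : Type*} {G : SimpleGraph V}

theorem exists_isFVS_subset_ncard_eq_fV1 {V1 : Set V} (h : ∃ F ⊆ V1, IsFVS G F) :
    ∃ F ⊆ V1, IsFVS G F ∧ F.ncard = fV1 G V1 := by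
  obtain ⟨F, hFV1, hF⟩ := h
  exact Nat.sInf_mem (s := {k | ∃ F : Set V, F ⊆ V1 ∧ IsFVS G F ∧ F.ncard = k})
    ⟨F.ncard, F, hFV1, hF, rfl⟩

theorem le_adjMatchNum [Finite V] {T : SimpleGraph V} {V1 V2 : Set V} {h : ℕ}
    (hT : IsV2SpanningTree G T V2) {e₁ e₂ : Fin h → Sym2 V} (hinj : Injective (Sum.elim e₁ e₂))
    (hmem : ∀ i, e₁ i ∈ G.edgeSet \ T.edgeSet ∧ e₂ i ∈ G.edgeSet \ T.edgeSet)
    (hV1 : ∀ i, ∃ x ∈ V1, x ∈ e₁ i ∧ x ∈ e₂ i) : h ≤ adjMatchNum G V1 V2 := by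
  unfold adjMatchNum
  refine le_csSup ?_ ⟨T, hT, e₁, e₂, hinj, hmem, hV1⟩
  refine ⟨Nat.card (Sym2 V), ?_⟩
  rintro k ⟨-, -, f₁, _, hf, -, -⟩
  simpa using Nat.card_le_card_of_injective f₁ (hf.comp Sum.inl_injective)

end FeedbackVertexSet

theorem stmt_9_general {V : Type*} [Fintype V]
    (G : SimpleGraph V) [DecidableRel G.Adj] (hconn : G.Connected)
    (V1 V2 : Set V)
    (hpart : V1 ∪ V2 = Set.univ) (hdisj : Disjoint V1 V2)
    (hforest2 : (G.induce V2).IsAcyclic)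
    (hdeg : ∀ v ∈ V1, G.degree v = 3) :
    (adjMatchNum G V1 V2 : ℤ) ≥
      ((G.edgeSet.ncard : ℤ) - (Fintype.card V : ℤ) + 1) - (fV1 G V1 : ℤ) := by
  classical
  have hV1c : V1ᶜ = V2 := IsCompl.compl_eq ⟨hdisj, codisjoint_iff.2 hpart⟩
  obtain ⟨F, hFV1, hF, hFcard⟩ :=
    exists_isFVS_subset_ncard_eq_fV1 ⟨V1, subset_rfl, by rwa [IsFVS, hV1c]⟩
  have hV2F {v} (hv : v ∈ V2) : v ∉ F := fun hvF => hdisj.notMem_of_mem_left (hFV1 hvF) hv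
  obtain ⟨T, hTG, hT, hTadj⟩ := hF.exists_isTree_le hconn
  have hTV2 : IsV2SpanningTree G T V2 :=
    ⟨hTG, hT, fun u v hu hv => hTadj (hV2F hu) (hV2F hv)⟩
  have hcover : ∀ e ∈ G.edgeSet \ T.edgeSet, ∃ v ∈ F, v ∈ e := by
    rintro ⟨u, v⟩ ⟨huv, huvT⟩
    by_contra! hnF
    exact huvT (hTadj (hnF u · (Sym2.mem_mk_left u v)) (hnF v · (Sym2.mem_mk_right u v)) huv)
  obtain ⟨p, hp, e₁, e₂, hinj, hmem, hF2⟩ :=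
    hT.exists_nontree_edge_pairs hTG (fun v hv => hdeg v (hFV1 hv)) hcover
  have hpμ : p ≤ adjMatchNum G V1 V2 := le_adjMatchNum hTV2 hinj hmem fun i =>
    (hF2 i).imp fun x hx => ⟨hFV1 hx.1, hx.2⟩
  have hcardT := hT.card_edgeFinset
  have hcardK := card_sdiff_of_subset (edgeFinset_mono hTG)
  have hcardTG := card_le_card (edgeFinset_mono hTG)
  rw [← coe_edgeFinset, Set.ncard_coe_finset, ← hFcard, Set.ncard_eq_toFinset_card' F]
  omega

/-- For a connected graph `G` with partition `(V1, V2)` into two forests where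
every vertex of `V1` has degree exactly 3:
`μ(G) ≥ β(G) − f_{V1}(G)`, where `β(G) = |E(G)| − |V(G)| + 1`. -/
theorem stmt_9 {V : Type*} [Fintype V] [DecidableEq V]
    (G : SimpleGraph V) [DecidableRel G.Adj] (hconn : G.Connected)
    (V1 V2 : Set V)
    (hpart : V1 ∪ V2 = Set.univ) (hdisj : Disjoint V1 V2)
    (hforest1 : (G.induce V1).IsAcyclic) (hforest2 : (G.induce V2).IsAcyclic)
    (hdeg : ∀ v ∈ V1, G.degree v = 3) :
    (adjMatchNum G V1 V2 : ℤ) ≥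
      ((G.edgeSet.ncard : ℤ) - (Fintype.card V : ℤ) + 1) - (fV1 G V1 : ℤ) :=
  stmt_9_general G hconn V1 V2 hpart hdisj hforest2 hdeg
end

section
/- Let G be a connected simple undirected graph whose vertex set is partitioned into (V1, V2) such that both induced subgraphs G[V1] and G[V2] are forests. Then the V1-adjacency matching number μ(G) equals the maximum integer h for which there exist h pairwise disjoint unordered pairs {e_1, e_1'}, …, {e_h, e_h'} of edges of G (all 2h edges distinct), such that for each i the edges e_i and e_i' are V1-adjacent, and the graph obtained from G by deleting these 2h edges is connected. -/
/-!
A `T_{G[V2]}`-tree avoiding a set `D` of edges survives in `G − D`, so `G − D` is connected.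
Conversely, if `G − D` is connected and every edge of `D` has an endpoint outside `V2`, the
forest `G[V2]` lies in `G − D` and extends to a spanning tree of `G − D`, which is a
`T_{G[V2]}`-tree avoiding `D`. Hence the two sets whose suprema are compared coincide.
-/

namespace SimpleGraph

variable {V : Type*} {G H : SimpleGraph V}

lemma IsAcyclic.of_induce {s : Set V} (hs : ∀ ⦃u v⦄, G.Adj u v → u ∈ s)
    (h : (G.induce s).IsAcyclic) : G.IsAcyclic := by
  intro v c hc
  have hsupp : ∀ x ∈ c.support, x ∈ s := by
    intro x hx
    obtain ⟨e, he, hxe⟩ := (Walk.mem_support_iff_exists_mem_edges_of_not_nil hc.not_nil).1 hx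
    induction e using Sym2.ind with
    | _ a b =>
      rcases Sym2.mem_iff.1 hxe with rfl | rfl
      · exact hs (c.adj_of_mem_edges he)
      · exact hs (c.adj_of_mem_edges he).symm
  refine h (c.induce s hsupp) ?_
  rw [← Walk.isCycle_map_iff_of_injective (f := (Embedding.induce (G := G) s).toHom)
    (Embedding.induce (G := G) s).injective, Walk.map_induce]
  exact hc

lemma isAcyclic_spanningCoe_induce_top {s : Set V} (h : (G.induce s).IsAcyclic) :
    ((⊤ : G.Subgraph).induce s).spanningCoe.IsAcyclic := by
  refine IsAcyclic.of_induce (s := s) (fun u v huv => huv.1) ?_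
  convert h using 1
  ext u v
  simp [u.2, v.2]

lemma le_deleteEdges_iff {s : Set (Sym2 V)} :
    H ≤ G.deleteEdges s ↔ H ≤ G ∧ ∀ e ∈ s, e ∉ H.edgeSet := by
  constructor
  · intro h
    refine ⟨h.trans (G.deleteEdges_le s), fun e he heH => ?_⟩
    have := edgeSet_mono h heH
    rw [edgeSet_deleteEdges] at this
    exact this.2 he
  · rintro ⟨hHG, hs⟩ u v huv
    exact deleteEdges_adj.2 ⟨hHG huv, fun he => hs _ he huv⟩

end SimpleGraph

open SimpleGraph

theorem exists_isV2SpanningTree_iff_connected_deleteEdges {V : Type*} {G : SimpleGraph V}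
    {V2 : Set V} {D : Set (Sym2 V)} (hforest : (G.induce V2).IsAcyclic)
    (hD : ∀ e ∈ D, ∃ x ∈ e, x ∉ V2) :
    (∃ T, IsV2SpanningTree G T V2 ∧ ∀ e ∈ D, e ∉ T.edgeSet) ↔ (G.deleteEdges D).Connected := by
  constructor
  · rintro ⟨T, ⟨hTG, hT, -⟩, hTD⟩
    exact hT.connected.mono (le_deleteEdges_iff.2 ⟨hTG, hTD⟩)
  · intro hconn
    have hle : ((⊤ : G.Subgraph).induce V2).spanningCoe ≤ G.deleteEdges D := by
      refine le_deleteEdges_iff.2 ⟨fun u v huv => huv.2.2, fun e he heH => ?_⟩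
      obtain ⟨x, hxe, hx⟩ := hD e he
      induction e using Sym2.ind with
      | _ a b => rcases Sym2.mem_iff.1 hxe with rfl | rfl <;> simp_all
    obtain ⟨T, hV2T, hTD, hT⟩ :=
      hconn.exists_isTree_le_of_le_of_isAcyclic hle (isAcyclic_spanningCoe_induce_top hforest)
    exact ⟨T, ⟨hTD.trans (G.deleteEdges_le D), hT, fun u v hu hv huv => hV2T ⟨hu, hv, huv⟩⟩,
      (le_deleteEdges_iff.1 hTD).2⟩

theorem stmt_11_general {V : Type*}
    (G : SimpleGraph V)
    (V1 V2 : Set V)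
    (hdisj : Disjoint V1 V2)
    (hforest2 : (G.induce V2).IsAcyclic) :
    adjMatchNum G V1 V2 =
      sSup {h | ∃ e₁ e₂ : Fin h → Sym2 V,
        Function.Injective (Sum.elim e₁ e₂) ∧
        (∀ i, e₁ i ∈ G.edgeSet ∧ e₂ i ∈ G.edgeSet) ∧
        (∀ i, ∃ x ∈ V1, x ∈ e₁ i ∧ x ∈ e₂ i) ∧
        (G.deleteEdges (Set.range e₁ ∪ Set.range e₂)).Connected} := by
  have key : ∀ {h} (e₁ e₂ : Fin h → Sym2 V), (∀ i, ∃ x ∈ V1, x ∈ e₁ i ∧ x ∈ e₂ i) →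
      ((∃ T, IsV2SpanningTree G T V2 ∧ ∀ i, e₁ i ∉ T.edgeSet ∧ e₂ i ∉ T.edgeSet) ↔
        (G.deleteEdges (Set.range e₁ ∪ Set.range e₂)).Connected) := by
    intro h e₁ e₂ hV1
    have hD : ∀ e ∈ Set.range e₁ ∪ Set.range e₂, ∃ x ∈ e, x ∉ V2 := by
      rintro _ (⟨i, rfl⟩ | ⟨i, rfl⟩) <;> obtain ⟨x, hx, hx₁, hx₂⟩ := hV1 i
      exacts [⟨x, hx₁, Set.disjoint_left.1 hdisj hx⟩, ⟨x, hx₂, Set.disjoint_left.1 hdisj hx⟩]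
    rw [← exists_isV2SpanningTree_iff_connected_deleteEdges hforest2 hD]
    simp only [Set.mem_union, Set.mem_range, or_imp, forall_and, forall_exists_index,
      forall_apply_eq_imp_iff]
  rw [adjMatchNum]
  congr 1
  ext h
  constructor
  · rintro ⟨T, hT, e₁, e₂, hinj, hmem, hV1⟩
    exact ⟨e₁, e₂, hinj, fun i => ⟨(hmem i).1.1, (hmem i).2.1⟩, hV1,
      (key e₁ e₂ hV1).1 ⟨T, hT, fun i => ⟨(hmem i).1.2, (hmem i).2.2⟩⟩⟩
  · rintro ⟨e₁, e₂, hinj, hmem, hV1, hconn⟩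
    obtain ⟨T, hT, hnot⟩ := (key e₁ e₂ hV1).2 hconn
    exact ⟨T, hT, e₁, e₂, hinj, fun i => ⟨⟨(hmem i).1, (hnot i).1⟩, (hmem i).2, (hnot i).2⟩, hV1⟩

/-- For a connected graph `G` with partition `(V1, V2)` into two forests, the
`V1`-adjacency matching number `μ(G)` equals the maximum integer `h` such that
there exist `h` pairwise disjoint pairs `{e₁ i, e₂ i}` of edges of `G` (all `2h`
edges distinct), each pair sharing a common endpoint in `V1`, such that deleting
these `2h` edges from `G` leaves a connected graph. -/
theorem stmt_11 {V : Type*} [Fintype V] [DecidableEq V]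
    (G : SimpleGraph V) [DecidableRel G.Adj] (hconn : G.Connected)
    (V1 V2 : Set V)
    (hpart : V1 ∪ V2 = Set.univ) (hdisj : Disjoint V1 V2)
    (hforest1 : (G.induce V1).IsAcyclic) (hforest2 : (G.induce V2).IsAcyclic) :
    adjMatchNum G V1 V2 =
      sSup {h | ∃ e₁ e₂ : Fin h → Sym2 V,
        Function.Injective (Sum.elim e₁ e₂) ∧
        (∀ i, e₁ i ∈ G.edgeSet ∧ e₂ i ∈ G.edgeSet) ∧
        (∀ i, ∃ x ∈ V1, x ∈ e₁ i ∧ x ∈ e₂ i) ∧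
        (G.deleteEdges (Set.range e₁ ∪ Set.range e₂)).Connected} :=
  stmt_11_general G V1 V2 hdisj hforest2
end
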